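/- arXiv:1901.03667 — 4 statements merged into one kernel-verified Lean document; each statement's English description precedes it below -/
import Mathlib

section
/- Let G be a C¹ Orlicz function satisfying the Δ₂-condition with constant K > 2 and the growth bound g(a)·a ≤ p·G(a) for some p > 1 (g = G'). Then there is a constant C > 0 such that for every ε ∈ (0,1) and all s, t ≥ 0: g(2s + t)·t ≤ (C·K²/2)·(ε·G(s) + 2·G(t/ε)). -/
/-!
Put `a = 2s + t`. If `t ≤ εs`, then `t ≤ εa` and `a ≤ 4s`, so the growth bound and two applications
of the Δ₂-condition give `g(a)t ≤ εpG(a) ≤ εpK²G(s)`. Otherwise `s, t ≤ t/ε`, so `a ≤ 4t/ε` and in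
the same way `g(a)t ≤ g(a)a ≤ pK²G(t/ε)`. Either way `g(a)t ≤ pK²(εG(s) + G(t/ε))`, which gives the
claim with `C = 2p`.
-/

lemma mul_le_of_mul_le_of_le_mul {b a c t l : ℝ} (hba : b * a ≤ c) (hc : 0 ≤ c) (ht : 0 ≤ t)
    (hl : 0 ≤ l) (hta : t ≤ l * a) : b * t ≤ l * c := by
  rcases le_or_gt 0 b with hb | hb
  · calc b * t ≤ b * (l * a) := mul_le_mul_of_nonneg_left hta hb
      _ = l * (b * a) := by ring
      _ ≤ l * c := mul_le_mul_of_nonneg_left hba hl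
  · nlinarith [mul_nonneg hl hc]

section Orlicz

variable {G g : ℝ → ℝ} {K p : ℝ}

lemma nonneg_of_monotoneOn_Ici (hmono : MonotoneOn G (Set.Ici 0)) (hG0 : G 0 = 0) {x : ℝ}
    (hx : 0 ≤ x) : 0 ≤ G x :=
  hG0 ▸ hmono Set.self_mem_Ici hx hx

lemma map_four_mul_le_sq_mul (hK : 0 ≤ K) (hΔ2 : ∀ x : ℝ, 0 ≤ x → G (2 * x) ≤ K * G x)
    {x : ℝ} (hx : 0 ≤ x) : G (4 * x) ≤ K ^ 2 * G x :=
  calc G (4 * x) = G (2 * (2 * x)) := by ring_nf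
    _ ≤ K * G (2 * x) := hΔ2 _ (by positivity)
    _ ≤ K * (K * G x) := mul_le_mul_of_nonneg_left (hΔ2 x hx) hK
    _ = K ^ 2 * G x := by ring

lemma mul_le_of_le_mul_of_le_four_mul (hmono : MonotoneOn G (Set.Ici 0)) (hG0 : G 0 = 0)
    (hK : 0 ≤ K) (hΔ2 : ∀ x : ℝ, 0 ≤ x → G (2 * x) ≤ K * G x) (hp : 0 ≤ p)
    (hgrowth : ∀ a : ℝ, 0 < a → g a * a ≤ p * G a) {a t l x : ℝ} (hx : 0 ≤ x)
    (hax : a ≤ 4 * x) (ht : 0 ≤ t) (hl : 0 ≤ l) (hta : t ≤ l * a) :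
    g a * t ≤ l * (p * (K ^ 2 * G x)) := by
  have hGx := nonneg_of_monotoneOn_Ici hmono hG0 hx
  rcases ht.eq_or_lt with rfl | ht
  · simp only [mul_zero]
    positivity
  have ha : 0 < a := by nlinarith
  have hGa : G a ≤ K ^ 2 * G x :=
    (hmono ha.le (by simp only [Set.mem_Ici]; positivity) hax).trans
      (map_four_mul_le_sq_mul hK hΔ2 hx)
  refine mul_le_of_mul_le_of_le_mul ?_ (by positivity) ht.le hl hta
  exact (hgrowth a ha).trans (mul_le_mul_of_nonneg_left hGa hp)

end Orlicz

theorem orlicz_combined_estimate_general (G g : ℝ → ℝ) (K p : ℝ)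
    (hmono : MonotoneOn G (Set.Ici 0))
    (hG0 : G 0 = 0)
    (hK : 2 < K)
    (hΔ2 : ∀ x : ℝ, 0 ≤ x → G (2 * x) ≤ K * G x)
    (hp : 1 < p)
    (hgrowth : ∀ a : ℝ, 0 < a → g a * a ≤ p * G a) :
    ∃ C : ℝ, 0 < C ∧ ∀ ε : ℝ, ε ∈ Set.Ioo (0:ℝ) 1 → ∀ s t : ℝ, 0 ≤ s → 0 ≤ t →
      g (2 * s + t) * t ≤ C * K ^ 2 / 2 * (ε * G s + 2 * G (t / ε)) := by
  refine ⟨2 * p, by positivity, ?_⟩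
  rintro ε ⟨hε0, hε1⟩ s t hs ht
  have step := @mul_le_of_le_mul_of_le_four_mul G g K p hmono hG0 (by positivity) hΔ2
    (by positivity) hgrowth (2 * s + t) t
  have hGs := nonneg_of_monotoneOn_Ici hmono hG0 hs
  have hGtε := nonneg_of_monotoneOn_Ici hmono hG0 (div_nonneg ht hε0.le)
  have hpK : 0 ≤ p * K ^ 2 := by positivity
  have key : g (2 * s + t) * t ≤ p * K ^ 2 * (ε * G s + G (t / ε)) := by
    rcases le_or_gt t (ε * s) with hts | hts
    · have := step hs (by nlinarith) ht hε0.le (by nlinarith)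
      nlinarith [mul_nonneg hpK hGtε]
    · have hst : s ≤ t / ε := by rw [le_div_iff₀ hε0]; linarith
      have htt : t ≤ t / ε := by rw [le_div_iff₀ hε0]; nlinarith
      have := step (by positivity : 0 ≤ t / ε) (by linarith) ht zero_le_one (by linarith)
      nlinarith [mul_nonneg hpK (mul_nonneg hε0.le hGs)]
  calc g (2 * s + t) * t ≤ p * K ^ 2 * (ε * G s + G (t / ε)) := key
    _ ≤ 2 * p * K ^ 2 / 2 * (ε * G s + 2 * G (t / ε)) := by nlinarith [mul_nonneg hpK hGtε]

theorem orlicz_combined_estimate (G g : ℝ → ℝ) (K p : ℝ)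
    (hcont : ContinuousOn G (Set.Ici 0))
    (hconv : ConvexOn ℝ (Set.Ici 0) G)
    (hmono : MonotoneOn G (Set.Ici 0))
    (hG0 : G 0 = 0)
    (hderiv : ∀ t : ℝ, 0 < t → HasDerivAt G (g t) t)
    (hK : 2 < K)
    (hΔ2 : ∀ x : ℝ, 0 ≤ x → G (2 * x) ≤ K * G x)
    (hp : 1 < p)
    (hgrowth : ∀ a : ℝ, 0 < a → g a * a ≤ p * G a) :
    ∃ C : ℝ, 0 < C ∧ ∀ ε : ℝ, ε ∈ Set.Ioo (0:ℝ) 1 → ∀ s t : ℝ, 0 ≤ s → 0 ≤ t →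
      g (2 * s + t) * t ≤ C * K ^ 2 / 2 * (ε * G s + 2 * G (t / ε)) :=
  orlicz_combined_estimate_general G g K p hmono hG0 hK hΔ2 hp hgrowth
end

section
/- Let Ω ⊆ ℝ^N be a measurable set and G a C¹ Orlicz function (continuous, convex, increasing, G(0)=0, satisfying the Δ₂-condition G(2x) ≤ K·G(x) with K > 2 and G(x)/x → 0 as x → 0). Suppose (u_n) is a sequence of measurable functions with sup_n ∫_Ω G(|u_n|) dx < ∞, u_n → u almost everywhere on Ω, and ∫_Ω G(|u|) dx < ∞. Then lim_{n→∞} ( ∫_Ω G(|u_n|) dx − ∫_Ω G(|u_n − u|) dx ) = ∫_Ω G(|u|) dx. -/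
/-!
With `Φ t = G |t|`, convexity and the Δ₂-condition give for every `ε > 0` a constant `C_ε`
with `|Φ (a + b) - Φ a| ≤ ε Φ a + C_ε Φ b`. For `g_n = u_n - u` the defect
`|Φ u_n - Φ g_n - Φ u|` is then at most `ε Φ g_n + (C_ε + 1) Φ u`. Its excess over
`ε Φ g_n` is dominated by `(C_ε + 1) Φ u` and tends to `0` a.e., so by dominated convergence
the integrated defect is eventually at most `ε sup_n ∫ Φ g_n + o(1)`, and
`sup_n ∫ Φ g_n < ∞` by the Δ₂-condition.
-/

open MeasureTheory Filter Set Topology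

namespace Orlicz

variable {G : ℝ → ℝ} {K : ℝ}

lemma apply_nonneg (hmono : MonotoneOn G (Ici 0)) (hG0 : G 0 = 0) {x : ℝ} (hx : 0 ≤ x) :
    0 ≤ G x :=
  hG0 ▸ hmono self_mem_Ici hx hx

lemma continuous_apply_abs (hcont : ContinuousOn G (Ici 0)) : Continuous fun t => G |t| :=
  hcont.comp_continuous continuous_abs fun t => abs_nonneg t

lemma apply_two_pow_mul_le (hK : 0 ≤ K) (hΔ2 : ∀ x, 0 ≤ x → G (2 * x) ≤ K * G x)
    (m : ℕ) {x : ℝ} (hx : 0 ≤ x) : G (2 ^ m * x) ≤ K ^ m * G x := by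
  induction m with
  | zero => simp
  | succ m ih =>
    calc G (2 ^ (m + 1) * x) = G (2 * (2 ^ m * x)) := by ring_nf
      _ ≤ K * G (2 ^ m * x) := hΔ2 _ (by positivity)
      _ ≤ K * (K ^ m * G x) := mul_le_mul_of_nonneg_left ih hK
      _ = K ^ (m + 1) * G x := by ring

lemma apply_add_le (hmono : MonotoneOn G (Ici 0)) (hG0 : G 0 = 0) (hK : 0 ≤ K)
    (hΔ2 : ∀ x, 0 ≤ x → G (2 * x) ≤ K * G x) {a b : ℝ} (ha : 0 ≤ a) (hb : 0 ≤ b) :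
    G (a + b) ≤ K * (G a + G b) := by
  have hmax : 0 ≤ max a b := le_max_of_le_left ha
  calc G (a + b) ≤ G (2 * max a b) :=
        hmono (add_nonneg ha hb) (mem_Ici.2 (by positivity))
          (by linarith [le_max_left a b, le_max_right a b])
    _ ≤ K * G (max a b) := hΔ2 _ hmax
    _ ≤ K * (G a + G b) := by
      gcongr
      rcases le_total a b with h | h
      · rw [max_eq_right h]; linarith [apply_nonneg hmono hG0 ha]
      · rw [max_eq_left h]; linarith [apply_nonneg hmono hG0 hb]

lemma exists_apply_add_le (hconv : ConvexOn ℝ (Ici 0) G) (hmono : MonotoneOn G (Ici 0))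
    (hG0 : G 0 = 0) (hK : 0 ≤ K) (hΔ2 : ∀ x, 0 ≤ x → G (2 * x) ≤ K * G x)
    {ε : ℝ} (hε : 0 < ε) :
    ∃ C ≥ 0, ∀ a b, 0 ≤ a → 0 ≤ b → G (a + b) ≤ (1 + ε) * G a + C * G b := by
  set s := min 1 (ε / (K + 1))
  have hs0 : 0 < s := lt_min one_pos (by positivity)
  have hs1 : s ≤ 1 := min_le_left _ _
  have hsK : s * (K + 1) ≤ ε := (le_div_iff₀ (by positivity)).1 (min_le_right _ _)
  obtain ⟨m, hm⟩ := pow_unbounded_of_one_lt (1 / s + 1) one_lt_two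
  refine ⟨K ^ m, by positivity, fun a b ha hb => ?_⟩
  have hGa := apply_nonneg hmono hG0 ha
  have hGb := apply_nonneg hmono hG0 hb
  have hKm : 0 ≤ K ^ m := pow_nonneg hK m
  -- For `b ≤ s a`, `a + b ≤ (1 - s) a + s (2 a)` and convexity costs only `s (K - 1) G a`;
  -- otherwise `a + b ≤ 2 ^ m b`.
  rcases le_or_gt b (s * a) with hba | hba
  · have hconvex : G ((1 - s) • a + s • (2 * a)) ≤ (1 - s) • G a + s • G (2 * a) :=
      hconv.2 ha (by positivity : (0:ℝ) ≤ 2 * a) (by linarith) hs0.le (by ring)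
    simp only [smul_eq_mul] at hconvex
    calc G (a + b) ≤ G ((1 - s) * a + s * (2 * a)) :=
          hmono (add_nonneg ha hb) (mem_Ici.2 (by nlinarith)) (by nlinarith)
      _ ≤ (1 - s) * G a + s * (K * G a) := by
          linarith [mul_le_mul_of_nonneg_left (hΔ2 a ha) hs0.le]
      _ ≤ (1 + ε) * G a + K ^ m * G b := by nlinarith
  · have hab : a + b ≤ 2 ^ m * b := by
      have : a ≤ b / s := by rw [le_div_iff₀ hs0]; linarith
      calc a + b ≤ (1 / s + 1) * b := by rw [add_mul, one_div_mul_eq_div]; linarith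
        _ ≤ 2 ^ m * b := by gcongr
    calc G (a + b) ≤ G (2 ^ m * b) := hmono (add_nonneg ha hb) (mem_Ici.2 (by positivity)) hab
      _ ≤ K ^ m * G b := apply_two_pow_mul_le hK hΔ2 m hb
      _ ≤ (1 + ε) * G a + K ^ m * G b := by nlinarith

lemma abs_apply_sub_apply_le (hmono : MonotoneOn G (Ici 0)) {ε C : ℝ}
    (hC : ∀ a b, 0 ≤ a → 0 ≤ b → G (a + b) ≤ (1 + ε) * G a + C * G b)
    {x y d : ℝ} (hx : 0 ≤ x) (hy : 0 ≤ y) (hxy : |x - y| ≤ d) :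
    |G x - G y| ≤ ε * G (min x y) + C * G d := by
  wlog h : x ≤ y generalizing x y
  · rw [abs_sub_comm, min_comm]
    exact this hy hx (by rwa [abs_sub_comm]) (le_of_not_ge h)
  have hd : 0 ≤ d := (abs_nonneg _).trans hxy
  have hyd : y ≤ x + d := by linarith [neg_abs_le (x - y)]
  rw [min_eq_left h, abs_of_nonpos (by linarith [hmono hx hy h])]
  linarith [hmono hy (add_nonneg hx hd) hyd, hC x d hx hd]

lemma exists_abs_apply_abs_add_sub_le (hconv : ConvexOn ℝ (Ici 0) G)
    (hmono : MonotoneOn G (Ici 0)) (hG0 : G 0 = 0) (hK : 0 ≤ K)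
    (hΔ2 : ∀ x, 0 ≤ x → G (2 * x) ≤ K * G x) {ε : ℝ} (hε : 0 < ε) :
    ∃ C ≥ 0, ∀ a b, |(G |a + b| - G |a|)| ≤ ε * G |a| + C * G |b| := by
  obtain ⟨C, hC0, hC⟩ := exists_apply_add_le hconv hmono hG0 hK hΔ2 hε
  refine ⟨C, hC0, fun a b => ?_⟩
  have hab : |(|a + b| - |a|)| ≤ |b| := by
    simpa using abs_abs_sub_abs_le_abs_sub (a + b) a
  have hmin : G (min |a + b| |a|) ≤ G |a| :=
    hmono (mem_Ici.2 (le_min (abs_nonneg _) (abs_nonneg _))) (mem_Ici.2 (abs_nonneg _))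
      (min_le_right _ _)
  have := abs_apply_sub_apply_le hmono hC (abs_nonneg _) (abs_nonneg _) hab
  nlinarith

lemma apply_abs_sub_le (hmono : MonotoneOn G (Ici 0)) (hG0 : G 0 = 0) (hK : 0 ≤ K)
    (hΔ2 : ∀ x, 0 ≤ x → G (2 * x) ≤ K * G x) (a b : ℝ) :
    G |a - b| ≤ K * (G |a| + G |b|) :=
  (hmono (mem_Ici.2 (abs_nonneg _)) (add_nonneg (abs_nonneg a) (abs_nonneg b))
    (abs_sub a b)).trans
    (apply_add_le hmono hG0 hK hΔ2 (abs_nonneg a) (abs_nonneg b))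

variable {α : Type*} [MeasurableSpace α] {μ : Measure α} {f g : α → ℝ}

lemma integrable_apply_abs_sub (hcont : ContinuousOn G (Ici 0))
    (hmono : MonotoneOn G (Ici 0)) (hG0 : G 0 = 0) (hK : 0 ≤ K)
    (hΔ2 : ∀ x, 0 ≤ x → G (2 * x) ≤ K * G x)
    (hf : AEStronglyMeasurable f μ) (hg : AEStronglyMeasurable g μ)
    (hf_int : Integrable (fun x => G |f x|) μ) (hg_int : Integrable (fun x => G |g x|) μ) :
    Integrable (fun x => G |f x - g x|) μ :=
  ((hf_int.add hg_int).const_mul K).mono'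
    ((continuous_apply_abs hcont).comp_aestronglyMeasurable (hf.sub hg))
    (.of_forall fun _ => (Real.norm_of_nonneg (apply_nonneg hmono hG0 (abs_nonneg _))).trans_le
      (apply_abs_sub_le hmono hG0 hK hΔ2 _ _))

lemma integral_apply_abs_sub_le (hcont : ContinuousOn G (Ici 0))
    (hmono : MonotoneOn G (Ici 0)) (hG0 : G 0 = 0) (hK : 0 ≤ K)
    (hΔ2 : ∀ x, 0 ≤ x → G (2 * x) ≤ K * G x)
    (hf : AEStronglyMeasurable f μ) (hg : AEStronglyMeasurable g μ)
    (hf_int : Integrable (fun x => G |f x|) μ) (hg_int : Integrable (fun x => G |g x|) μ) :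
    ∫ x, G |f x - g x| ∂μ ≤ K * (∫ x, G |f x| ∂μ + ∫ x, G |g x| ∂μ) := by
  rw [← integral_add hf_int hg_int, ← integral_const_mul]
  exact integral_mono (integrable_apply_abs_sub hcont hmono hG0 hK hΔ2 hf hg hf_int hg_int)
    ((hf_int.add hg_int).const_mul K) fun x => apply_abs_sub_le hmono hG0 hK hΔ2 _ _

end Orlicz

lemma tendsto_zero_of_forall_le_add {ι : Type*} {l : Filter ι} {a : ι → ℝ}
    (ha : ∀ i, 0 ≤ a i)
    (h : ∀ ε > 0, ∃ b : ι → ℝ, Tendsto b l (𝓝 0) ∧ ∀ i, a i ≤ b i + ε) :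
    Tendsto a l (𝓝 0) := by
  refine tendsto_order.2 ⟨fun c hc => .of_forall fun i => hc.trans_le (ha i), fun c hc => ?_⟩
  obtain ⟨b, hb, hab⟩ := h (c / 2) (half_pos hc)
  filter_upwards [(tendsto_order.1 hb).2 _ (half_pos hc)] with i hi
  linarith [hab i]

namespace BrezisLieb

def defect (Φ : ℝ → ℝ) (p q : ℝ) : ℝ := |Φ p - Φ (p - q) - Φ q|

variable {α : Type*} [MeasurableSpace α] {μ : Measure α} {Φ : ℝ → ℝ}

lemma defect_le (hΦnn : ∀ t, 0 ≤ Φ t) {δ C : ℝ}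
    (hC : ∀ a b, |Φ (a + b) - Φ a| ≤ δ * Φ a + C * Φ b) (p q : ℝ) :
    defect Φ p q ≤ δ * Φ (p - q) + (C + 1) * Φ q := by
  have h := hC (p - q) q
  rw [sub_add_cancel] at h
  have := abs_sub (Φ p - Φ (p - q)) (Φ q)
  rw [abs_of_nonneg (hΦnn q)] at this
  unfold defect
  linarith

lemma tendsto_defect_zero (hΦc : Continuous Φ) (hΦ0 : Φ 0 = 0) {p : ℕ → ℝ} {q : ℝ}
    (hp : Tendsto p atTop (𝓝 q)) : Tendsto (fun n => defect Φ (p n) q) atTop (𝓝 0) := by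
  have h := (((hΦc.tendsto q).comp hp).sub ((hΦc.tendsto 0).comp
    (tendsto_sub_nhds_zero_iff.2 hp))).sub_const (Φ q) |>.abs
  simpa [defect, hΦ0] using h

lemma aestronglyMeasurable_defect (hΦc : Continuous Φ) {g f : α → ℝ}
    (hg : AEStronglyMeasurable g μ) (hf : AEStronglyMeasurable f μ) :
    AEStronglyMeasurable (fun x => defect Φ (g x) (f x)) μ := by
  unfold defect
  fun_prop

lemma integrable_defect (hΦc : Continuous Φ) (hΦnn : ∀ t, 0 ≤ Φ t) {δ C : ℝ}
    (hC : ∀ a b, |Φ (a + b) - Φ a| ≤ δ * Φ a + C * Φ b) {g f : α → ℝ}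
    (hg : AEStronglyMeasurable g μ) (hf : AEStronglyMeasurable f μ)
    (hgf_int : Integrable (fun x => Φ (g x - f x)) μ)
    (hf_int : Integrable (fun x => Φ (f x)) μ) :
    Integrable (fun x => defect Φ (g x) (f x)) μ := by
  refine ((hgf_int.const_mul δ).add (hf_int.const_mul (C + 1))).mono'
    (aestronglyMeasurable_defect hΦc hg hf)
    (.of_forall fun _ =>
      (Real.norm_of_nonneg (abs_nonneg _)).trans_le (defect_le hΦnn hC _ _))

def excess (Φ : ℝ → ℝ) (δ p q : ℝ) : ℝ := max (defect Φ p q - δ * Φ (p - q)) 0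

lemma norm_excess_le (hΦnn : ∀ t, 0 ≤ Φ t) {δ C : ℝ} (hC0 : 0 ≤ C)
    (hC : ∀ a b, |Φ (a + b) - Φ a| ≤ δ * Φ a + C * Φ b) (p q : ℝ) :
    ‖excess Φ δ p q‖ ≤ (C + 1) * Φ q :=
  (Real.norm_of_nonneg (le_max_right _ _)).trans_le <|
    max_le (by linarith [defect_le hΦnn hC p q]) (mul_nonneg (by linarith) (hΦnn q))

lemma integrable_excess (hΦc : Continuous Φ) (hΦnn : ∀ t, 0 ≤ Φ t) {δ C : ℝ}
    (hC0 : 0 ≤ C)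
    (hC : ∀ a b, |Φ (a + b) - Φ a| ≤ δ * Φ a + C * Φ b) {g f : α → ℝ}
    (hg : AEStronglyMeasurable g μ) (hf : AEStronglyMeasurable f μ)
    (hf_int : Integrable (fun x => Φ (f x)) μ) :
    Integrable (fun x => excess Φ δ (g x) (f x)) μ :=
  (hf_int.const_mul (C + 1)).mono'
    (((aestronglyMeasurable_defect hΦc hg hf).sub
      ((hΦc.comp_aestronglyMeasurable (hg.sub hf)).const_mul δ)).sup
        aestronglyMeasurable_const)
    (.of_forall fun _ => norm_excess_le hΦnn hC0 hC _ _)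

variable {F : ℕ → α → ℝ} {f : α → ℝ}

lemma tendsto_integral_excess (hΦc : Continuous Φ) (hΦ0 : Φ 0 = 0)
    (hΦnn : ∀ t, 0 ≤ Φ t) {δ C : ℝ} (hC0 : 0 ≤ C)
    (hC : ∀ a b, |Φ (a + b) - Φ a| ≤ δ * Φ a + C * Φ b)
    (hF : ∀ n, AEStronglyMeasurable (F n) μ) (hf : AEStronglyMeasurable f μ)
    (hFf : ∀ᵐ x ∂μ, Tendsto (fun n => F n x) atTop (𝓝 (f x)))
    (hf_int : Integrable (fun x => Φ (f x)) μ) :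
    Tendsto (fun n => ∫ x, excess Φ δ (F n x) (f x) ∂μ) atTop (𝓝 0) := by
  have hlim : ∀ᵐ x ∂μ, Tendsto (fun n => excess Φ δ (F n x) (f x)) atTop (𝓝 0) := by
    filter_upwards [hFf] with x hx
    have hg : Tendsto (fun n => Φ (F n x - f x)) atTop (𝓝 0) := by
      have := (hΦc.tendsto 0).comp (tendsto_sub_nhds_zero_iff.2 hx)
      rwa [hΦ0] at this
    simpa [excess] using ((tendsto_defect_zero hΦc hΦ0 hx).sub (hg.const_mul δ)).max
      (tendsto_const_nhds (x := (0 : ℝ)))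
  simpa using tendsto_integral_of_dominated_convergence _
    (fun n => (integrable_excess hΦc hΦnn hC0 hC (hF n) hf hf_int).aestronglyMeasurable)
    (hf_int.const_mul _) (fun n => .of_forall fun x => norm_excess_le hΦnn hC0 hC _ _) hlim

lemma tendsto_integral_defect (hΦc : Continuous Φ) (hΦ0 : Φ 0 = 0) (hΦnn : ∀ t, 0 ≤ Φ t)
    (hΦ : ∀ ε > 0, ∃ C ≥ 0, ∀ a b, |Φ (a + b) - Φ a| ≤ ε * Φ a + C * Φ b)
    (hF : ∀ n, AEStronglyMeasurable (F n) μ) (hf : AEStronglyMeasurable f μ)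
    (hFf : ∀ᵐ x ∂μ, Tendsto (fun n => F n x) atTop (𝓝 (f x)))
    (hf_int : Integrable (fun x => Φ (f x)) μ)
    (hFf_int : ∀ n, Integrable (fun x => Φ (F n x - f x)) μ)
    {B : ℝ} (hB : ∀ n, ∫ x, Φ (F n x - f x) ∂μ ≤ B) :
    Tendsto (fun n => ∫ x, defect Φ (F n x) (f x) ∂μ) atTop (𝓝 0) := by
  have hB0 : 0 ≤ B := (integral_nonneg fun x => hΦnn _).trans (hB 0)
  refine tendsto_zero_of_forall_le_add (fun n => integral_nonneg fun x => abs_nonneg _)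
    fun ε hε => ?_
  have hδ : 0 < ε / (B + 1) := by positivity
  obtain ⟨C, hC0, hC⟩ := hΦ (ε / (B + 1)) hδ
  refine ⟨_, tendsto_integral_excess hΦc hΦ0 hΦnn hC0 hC hF hf hFf hf_int, fun n => ?_⟩
  set δ := ε / (B + 1)
  have hδB : δ * B ≤ ε := by
    rw [div_mul_eq_mul_div, div_le_iff₀ (by positivity)]
    nlinarith
  have hexcess_int := integrable_excess hΦc hΦnn hC0 hC (hF n) hf hf_int
  calc ∫ x, defect Φ (F n x) (f x) ∂μ
      ≤ ∫ x, (excess Φ δ (F n x) (f x) + δ * Φ (F n x - f x)) ∂μ :=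
        integral_mono (integrable_defect hΦc hΦnn hC (hF n) hf (hFf_int n) hf_int)
          (hexcess_int.add ((hFf_int n).const_mul δ)) fun x =>
            sub_le_iff_le_add.1 (le_max_left _ _)
    _ = ∫ x, excess Φ δ (F n x) (f x) ∂μ + δ * ∫ x, Φ (F n x - f x) ∂μ := by
        rw [integral_add hexcess_int ((hFf_int n).const_mul δ), integral_const_mul]
    _ ≤ _ := by linarith [mul_le_mul_of_nonneg_left (hB n) hδ.le]

theorem tendsto_integral_sub_integral_sub (hΦc : Continuous Φ) (hΦ0 : Φ 0 = 0)
    (hΦnn : ∀ t, 0 ≤ Φ t)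
    (hΦ : ∀ ε > 0, ∃ C ≥ 0, ∀ a b, |Φ (a + b) - Φ a| ≤ ε * Φ a + C * Φ b)
    (hF : ∀ n, AEStronglyMeasurable (F n) μ) (hf : AEStronglyMeasurable f μ)
    (hFf : ∀ᵐ x ∂μ, Tendsto (fun n => F n x) atTop (𝓝 (f x)))
    (hf_int : Integrable (fun x => Φ (f x)) μ)
    (hFf_int : ∀ n, Integrable (fun x => Φ (F n x - f x)) μ)
    {B : ℝ} (hB : ∀ n, ∫ x, Φ (F n x - f x) ∂μ ≤ B) :
    Tendsto (fun n => ∫ x, Φ (F n x) ∂μ - ∫ x, Φ (F n x - f x) ∂μ) atTop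
      (𝓝 (∫ x, Φ (f x) ∂μ)) := by
  obtain ⟨C, -, hC⟩ := hΦ 1 one_pos
  have hdefect_int n := integrable_defect hΦc hΦnn hC (hF n) hf (hFf_int n) hf_int
  have hF_int : ∀ n, Integrable (fun x => Φ (F n x)) μ := fun n =>
    (((hdefect_int n).add (hFf_int n)).add hf_int).mono'
      (hΦc.comp_aestronglyMeasurable (hF n)) (.of_forall fun x => by
        rw [Real.norm_of_nonneg (hΦnn _)]
        show Φ (F n x) ≤ defect Φ (F n x) (f x) + Φ (F n x - f x) + Φ (f x)
        unfold defect
        linarith [le_abs_self (Φ (F n x) - Φ (F n x - f x) - Φ (f x))])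
  rw [← tendsto_sub_nhds_zero_iff]
  refine squeeze_zero_norm (fun n => ?_)
    (tendsto_integral_defect hΦc hΦ0 hΦnn hΦ hF hf hFf hf_int hFf_int hB)
  have hsplit : ∫ x, Φ (F n x) ∂μ - ∫ x, Φ (F n x - f x) ∂μ - ∫ x, Φ (f x) ∂μ
      = ∫ x, (Φ (F n x) - Φ (F n x - f x) - Φ (f x)) ∂μ := by
    have h : Integrable (fun x => Φ (F n x) - Φ (F n x - f x)) μ := (hF_int n).sub (hFf_int n)
    rw [integral_sub h hf_int, integral_sub (hF_int n) (hFf_int n)]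
  rw [hsplit]
  exact norm_integral_le_integral_norm _

end BrezisLieb

theorem brezis_lieb_orlicz_general (N : ℕ) (Ω : Set (EuclideanSpace ℝ (Fin N)))
    (G : ℝ → ℝ) (K : ℝ)
    (hcont : ContinuousOn G (Set.Ici 0))
    (hconv : ConvexOn ℝ (Set.Ici 0) G)
    (hmono : MonotoneOn G (Set.Ici 0))
    (hG0 : G 0 = 0)
    (hK : 2 < K)
    (hΔ2 : ∀ x : ℝ, 0 ≤ x → G (2 * x) ≤ K * G x)
    (u : (EuclideanSpace ℝ (Fin N)) → ℝ) (un : ℕ → (EuclideanSpace ℝ (Fin N)) → ℝ)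
    (hmeas : ∀ n, AEMeasurable (un n) (volume.restrict Ω))
    (humeas : AEMeasurable u (volume.restrict Ω))
    (hint : ∀ n, IntegrableOn (fun x => G |un n x|) Ω volume)
    (hbdd : ∃ M : ℝ, ∀ n, (∫ x in Ω, G |un n x|) ≤ M)
    (hae : ∀ᵐ x ∂(volume.restrict Ω), Tendsto (fun n => un n x) atTop (nhds (u x)))
    (huint : IntegrableOn (fun x => G |u x|) Ω volume) :
    Tendsto (fun n => (∫ x in Ω, G |un n x|) - ∫ x in Ω, G |un n x - u x|)
      atTop (nhds (∫ x in Ω, G |u x|)) := by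
  obtain ⟨M, hM⟩ := hbdd
  have hK0 : 0 ≤ K := by linarith
  have hun := fun n => (hmeas n).aestronglyMeasurable
  refine BrezisLieb.tendsto_integral_sub_integral_sub (Φ := fun t => G |t|)
    (Orlicz.continuous_apply_abs hcont) (by simpa using hG0)
    (fun t => Orlicz.apply_nonneg hmono hG0 (abs_nonneg t))
    (fun ε hε => Orlicz.exists_abs_apply_abs_add_sub_le hconv hmono hG0 hK0 hΔ2 hε)
    hun humeas.aestronglyMeasurable hae huint
    (fun n => Orlicz.integrable_apply_abs_sub hcont hmono hG0 hK0 hΔ2 (hun n)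
      humeas.aestronglyMeasurable (hint n) huint)
    (B := K * (M + ∫ x in Ω, G |u x|)) fun n => ?_
  calc ∫ x in Ω, G |un n x - u x|
      ≤ K * ((∫ x in Ω, G |un n x|) + ∫ x in Ω, G |u x|) :=
        Orlicz.integral_apply_abs_sub_le hcont hmono hG0 hK0 hΔ2 (hun n)
          humeas.aestronglyMeasurable (hint n) huint
    _ ≤ K * (M + ∫ x in Ω, G |u x|) := by gcongr; exact hM n

theorem brezis_lieb_orlicz (N : ℕ) (Ω : Set (EuclideanSpace ℝ (Fin N)))
    (hΩ : MeasurableSet Ω)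
    (G : ℝ → ℝ) (K : ℝ)
    (hcont : ContinuousOn G (Set.Ici 0))
    (hconv : ConvexOn ℝ (Set.Ici 0) G)
    (hmono : MonotoneOn G (Set.Ici 0))
    (hG0 : G 0 = 0)
    (hC1 : ∀ t : ℝ, 0 < t → HasDerivAt G (deriv G t) t)
    (hdcont : ContinuousOn (deriv G) (Set.Ioi 0))
    (hK : 2 < K)
    (hΔ2 : ∀ x : ℝ, 0 ≤ x → G (2 * x) ≤ K * G x)
    (hlim : Tendsto (fun x => G x / x) (nhdsWithin 0 (Set.Ioi 0)) (nhds 0))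
    (u : (EuclideanSpace ℝ (Fin N)) → ℝ) (un : ℕ → (EuclideanSpace ℝ (Fin N)) → ℝ)
    (hmeas : ∀ n, AEMeasurable (un n) (volume.restrict Ω))
    (humeas : AEMeasurable u (volume.restrict Ω))
    (hint : ∀ n, IntegrableOn (fun x => G |un n x|) Ω volume)
    (hbdd : ∃ M : ℝ, ∀ n, (∫ x in Ω, G |un n x|) ≤ M)
    (hae : ∀ᵐ x ∂(volume.restrict Ω), Tendsto (fun n => un n x) atTop (nhds (u x)))
    (huint : IntegrableOn (fun x => G |u x|) Ω volume) :
    Tendsto (fun n => (∫ x in Ω, G |un n x|) - ∫ x in Ω, G |un n x - u x|)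
      atTop (nhds (∫ x in Ω, G |u x|)) :=
  brezis_lieb_orlicz_general N Ω G K hcont hconv hmono hG0 hK hΔ2 u un hmeas humeas hint hbdd hae
    huint
end

section
/- Let Ω ⊆ ℝ^N be measurable, G a C¹ Orlicz function with Δ₂-constant K > 2, derivative g satisfying g(a)·a ≤ p·G(a) for some p > 1, and C' > 0 the constant from the Young-type estimate. If (u_n) is a sequence of measurable functions with u_n → u a.e., sup_n ∫_Ω G(|u_n − u|) dx ≤ M < ∞ and ∫_Ω G(|u|/ε) dx < ∞ for every ε ∈ (0,1), then for every ε ∈ (0,1): limsup_{n→∞} ∫_Ω |G(|u_n|) − G(|u_n − u|) − G(|u|)| dx ≤ ε·(C·K²/2)·M, where C = max(p−1,1). -/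
/-!
With `c = ε·C·K²/2`, split the integrand `F_n = |G(|u_n|) - G(|u_n - u|) - G(|u|)|` as
`F_n ≤ W_n + c·G(|u_n - u|)`, where `W_n = (F_n - c·G(|u_n - u|))⁺`. The last term integrates to at
most `c·M`. The Young-type estimate `|G(s) - G(t)| ≤ c·G(t) + C·K²·G(|s - t|/ε)` (the mean value
theorem with `g(2t)·2t ≤ p·K·G(t)` when `|s - t| ≤ ε·t`, the Δ₂-condition otherwise) dominates `W_n`
by the integrable `(C·K² + 1)·G(|u|/ε)`, and `W_n → 0` a.e., so `∫ W_n → 0` by dominated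
convergence.
-/

open MeasureTheory Filter Set Topology

section OrliczFunction

variable {G g : ℝ → ℝ}

lemma MonotoneOn.nonneg_of_map_zero (hmono : MonotoneOn G (Ici 0)) (hG0 : G 0 = 0) {x : ℝ}
    (hx : 0 ≤ x) : 0 ≤ G x :=
  hG0 ▸ hmono self_mem_Ici hx hx

lemma ConvexOn.nonneg_of_hasDerivAt_of_monotoneOn (hconv : ConvexOn ℝ (Ici 0) G)
    (hmono : MonotoneOn G (Ici 0)) {x d : ℝ} (hx : 0 < x) (hd : HasDerivAt G d x) : 0 ≤ d :=
  (hmono.slope_nonneg self_mem_Ici hx.le).trans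
    (hconv.slope_le_of_hasDerivAt self_mem_Ici hx.le hx hd)

lemma ConvexOn.monotoneOn_of_hasDerivAt (hconv : ConvexOn ℝ (Ici 0) G)
    (hderiv : ∀ t, 0 < t → HasDerivAt G (g t) t) : MonotoneOn g (Ioi 0) :=
  ((hconv.subset Ioi_subset_Ici_self (convex_Ioi 0)).monotoneOn_deriv
    fun x hx => (hderiv x hx).differentiableAt).congr fun x hx => (hderiv x hx).deriv

lemma ConvexOn.abs_sub_le_mul_abs_sub (hconv : ConvexOn ℝ (Ici 0) G)
    (hmono : MonotoneOn G (Ici 0)) (hderiv : ∀ t, 0 < t → HasDerivAt G (g t) t)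
    {s t : ℝ} (hs : 0 ≤ s) (ht : 0 ≤ t) : |G s - G t| ≤ g (max s t) * |s - t| := by
  wlog hst : s ≤ t generalizing s t
  · simpa only [abs_sub_comm, max_comm] using this ht hs (le_of_not_ge hst)
  rcases hst.eq_or_lt with rfl | hlt
  · simp
  have hslope := hconv.slope_le_of_hasDerivAt hs ht hlt (hderiv t (hs.trans_lt hlt))
  rw [slope_def_field, div_le_iff₀ (sub_pos.2 hlt)] at hslope
  rw [max_eq_right hst, abs_sub_comm s, abs_of_nonneg (sub_nonneg.2 hst),
    abs_sub_comm (G s), abs_of_nonneg (sub_nonneg.2 (hmono hs ht hst))]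
  exact hslope

lemma ConvexOn.abs_sub_le_of_abs_sub_le_mul (hconv : ConvexOn ℝ (Ici 0) G)
    (hmono : MonotoneOn G (Ici 0)) (hderiv : ∀ t, 0 < t → HasDerivAt G (g t) t) {K p ε s t : ℝ}
    (hΔ2 : ∀ x, 0 ≤ x → G (2 * x) ≤ K * G x) (hp : 0 ≤ p)
    (hgrowth : ∀ a, 0 < a → g a * a ≤ p * G a) (hε : 0 ≤ ε) (hε1 : ε ≤ 1)
    (hs : 0 ≤ s) (ht : 0 < t) (hst : |s - t| ≤ ε * t) :
    |G s - G t| ≤ ε / 2 * (p * K) * G t := by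
  have hmax : max s t ≤ 2 * t :=
    max_le (by linarith [(abs_le.1 hst).2, mul_le_of_le_one_left ht.le hε1]) (by linarith)
  have hg2t : 0 ≤ g (2 * t) :=
    hconv.nonneg_of_hasDerivAt_of_monotoneOn hmono (by positivity) (hderiv _ (by positivity))
  calc |G s - G t| ≤ g (max s t) * |s - t| :=
        hconv.abs_sub_le_mul_abs_sub hmono hderiv hs ht.le
    _ ≤ g (2 * t) * (ε * t) := by
        gcongr
        exact hconv.monotoneOn_of_hasDerivAt hderiv (lt_max_of_lt_right ht)
          (show (0 : ℝ) < 2 * t by positivity) hmax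
    _ = ε / 2 * (g (2 * t) * (2 * t)) := by ring
    _ ≤ ε / 2 * (p * G (2 * t)) := by gcongr ε / 2 * ?_; exact hgrowth (2 * t) (by linarith)
    _ ≤ ε / 2 * (p * (K * G t)) := by gcongr; exact hΔ2 t ht.le
    _ = ε / 2 * (p * K) * G t := by ring

lemma MonotoneOn.abs_sub_le_of_le_div (hmono : MonotoneOn G (Ici 0)) (hG0 : G 0 = 0)
    {K ε s t b : ℝ} (hΔ2 : ∀ x, 0 ≤ x → G (2 * x) ≤ K * G x) (hε : 0 < ε) (hε1 : ε ≤ 1)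
    (hs : 0 ≤ s) (ht : 0 ≤ t) (hb : 0 ≤ b) (hst : |s - t| ≤ b) (htb : t ≤ b / ε) :
    |G s - G t| ≤ K * G (b / ε) := by
  have hbb : b ≤ b / ε := le_div_self hb hε hε1
  have hbε : 0 ≤ b / ε := hb.trans hbb
  have hle : ∀ r, 0 ≤ r → r ≤ 2 * (b / ε) → G r ≤ K * G (b / ε) := fun r hr hrb =>
    (hmono hr (by positivity : (0:ℝ) ≤ 2 * (b / ε)) hrb).trans (hΔ2 _ hbε)
  exact abs_sub_le_of_nonneg_of_le (hmono.nonneg_of_map_zero hG0 hs)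
    (hle s hs (by linarith [(abs_le.1 hst).2])) (hmono.nonneg_of_map_zero hG0 ht)
    (hle t ht (by linarith))

lemma ConvexOn.abs_sub_le_young (hconv : ConvexOn ℝ (Ici 0) G) (hmono : MonotoneOn G (Ici 0))
    (hG0 : G 0 = 0) (hderiv : ∀ t, 0 < t → HasDerivAt G (g t) t) {K p ε s t b : ℝ} (hK : 2 ≤ K)
    (hΔ2 : ∀ x, 0 ≤ x → G (2 * x) ≤ K * G x) (hp : 0 ≤ p)
    (hgrowth : ∀ a, 0 < a → g a * a ≤ p * G a) (hε : 0 < ε) (hε1 : ε ≤ 1)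
    (hs : 0 ≤ s) (ht : 0 ≤ t) (hb : 0 ≤ b) (hst : |s - t| ≤ b) :
    |G s - G t|
      ≤ ε * (max (p - 1) 1 * K ^ 2 / 2) * G t + max (p - 1) 1 * K ^ 2 * G (b / ε) := by
  set C := max (p - 1) 1
  have hC : 1 ≤ C := le_max_right _ _
  have hGt : 0 ≤ G t := hmono.nonneg_of_map_zero hG0 ht
  have hGb : 0 ≤ G (b / ε) := hmono.nonneg_of_map_zero hG0 (by positivity)
  by_cases hnear : 0 < t ∧ b ≤ ε * t
  · have hpK : p * K ≤ C * K ^ 2 := by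
      have : p ≤ 2 * C := by
        rcases le_total p 2 with h | h <;> linarith [le_max_left (p - 1) 1]
      nlinarith [mul_le_mul_of_nonneg_right this (by linarith : (0 : ℝ) ≤ K),
        mul_le_mul_of_nonneg_left hK (mul_nonneg (by linarith) (by linarith) : 0 ≤ C * K)]
    calc |G s - G t| ≤ ε / 2 * (p * K) * G t :=
          hconv.abs_sub_le_of_abs_sub_le_mul hmono hderiv hΔ2 hp hgrowth hε.le hε1 hs hnear.1
            (hst.trans hnear.2)
      _ ≤ ε * (C * K ^ 2 / 2) * G t := by
          gcongr ?_ * G t; nlinarith [mul_le_mul_of_nonneg_left hpK hε.le]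
      _ ≤ _ := le_add_of_nonneg_right (by positivity)
  · have htb : t ≤ b / ε := by
      rw [le_div_iff₀ hε]
      rcases ht.lt_or_eq with h | rfl
      · linarith [not_and.1 hnear h]
      · simpa using hb
    calc |G s - G t| ≤ K * G (b / ε) :=
          hmono.abs_sub_le_of_le_div hG0 hΔ2 hε hε1 hs ht hb hst htb
      _ ≤ C * K ^ 2 * G (b / ε) := by gcongr; nlinarith
      _ ≤ _ := le_add_of_nonneg_left (by positivity)

lemma ConvexOn.abs_sub_sub_le_young (hconv : ConvexOn ℝ (Ici 0) G)
    (hmono : MonotoneOn G (Ici 0))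
    (hG0 : G 0 = 0) (hderiv : ∀ t, 0 < t → HasDerivAt G (g t) t) {K p ε : ℝ} (hK : 2 ≤ K)
    (hΔ2 : ∀ x, 0 ≤ x → G (2 * x) ≤ K * G x) (hp : 0 ≤ p)
    (hgrowth : ∀ a, 0 < a → g a * a ≤ p * G a) (hε : 0 < ε) (hε1 : ε ≤ 1) (a w : ℝ) :
    |G (|a|) - G (|a - w|) - G (|w|)|
      ≤ ε * (max (p - 1) 1 * K ^ 2 / 2) * G |a - w|
        + (max (p - 1) 1 * K ^ 2 + 1) * G (|w| / ε) := by
  have hyoung := hconv.abs_sub_le_young hmono hG0 hderiv hK hΔ2 hp hgrowth hε hε1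
    (abs_nonneg a) (abs_nonneg (a - w)) (abs_nonneg w)
    (by simpa using abs_abs_sub_abs_le_abs_sub a (a - w))
  have hGw : G |w| ≤ G (|w| / ε) :=
    hmono (abs_nonneg w) (show 0 ≤ |w| / ε by positivity) (le_div_self (abs_nonneg w) hε hε1)
  calc |G (|a|) - G (|a - w|) - G (|w|)|
      ≤ |G (|a|) - G (|a - w|)| + G (|w|) := by
        simpa [abs_of_nonneg (hmono.nonneg_of_map_zero hG0 (abs_nonneg w))] using
          abs_sub (G (|a|) - G (|a - w|)) (G (|w|))
    _ ≤ _ := by linarith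

end OrliczFunction

lemma norm_max_sub_zero_le {a b d : ℝ} (h : a ≤ b + d) : ‖max (a - b) 0‖ ≤ ‖d‖ := by
  rw [Real.norm_of_nonneg (le_max_right _ _), Real.norm_eq_abs]
  exact max_le (by linarith [le_abs_self d]) (abs_nonneg d)

section Truncation

variable {α : Type*} [MeasurableSpace α] {μ : Measure α} {c : ℝ} {D : α → ℝ}

lemma integrable_max_sub_mul_zero {f k : α → ℝ} (hf : AEStronglyMeasurable f μ)
    (hk : AEStronglyMeasurable k μ) (hD : Integrable D μ) (hle : ∀ x, f x ≤ c * k x + D x) :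
    Integrable (fun x => max (f x - c * k x) 0) μ :=
  hD.norm.mono' ((hf.sub (hk.const_mul c)).sup aestronglyMeasurable_const)
    (.of_forall fun x => norm_max_sub_zero_le (hle x))

lemma tendsto_integral_max_sub_mul_zero {F h : ℕ → α → ℝ} (hc : 0 ≤ c)
    (hh0 : ∀ n x, 0 ≤ h n x) (hF : ∀ n, AEStronglyMeasurable (F n) μ)
    (hh : ∀ n, AEStronglyMeasurable (h n) μ)
    (hD : Integrable D μ) (hle : ∀ n x, F n x ≤ c * h n x + D x)
    (hlim : ∀ᵐ x ∂μ, Tendsto (F · x) atTop (𝓝 0)) :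
    Tendsto (fun n => ∫ x, max (F n x - c * h n x) 0 ∂μ) atTop (𝓝 0) := by
  have hW : ∀ᵐ x ∂μ, Tendsto (fun n => max (F n x - c * h n x) 0) atTop (𝓝 0) := by
    filter_upwards [hlim] with x hx
    have hFpos : Tendsto (fun n => max (F n x) 0) atTop (𝓝 0) := by
      simpa using hx.max (tendsto_const_nhds (x := (0 : ℝ)))
    refine tendsto_of_tendsto_of_tendsto_of_le_of_le tendsto_const_nhds hFpos
      (fun n => le_max_right _ _) fun n => ?_
    exact max_le_max_right 0 (sub_le_self _ (mul_nonneg hc (hh0 n x)))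
  simpa using tendsto_integral_of_dominated_convergence (fun x => ‖D x‖)
    (fun n => ((hF n).sub ((hh n).const_mul c)).sup aestronglyMeasurable_const) hD.norm
    (fun n => .of_forall fun x => norm_max_sub_zero_le (hle n x)) hW

theorem limsup_integral_le_of_le_mul_add {F h : ℕ → α → ℝ} {M : ℝ} (hc : 0 ≤ c)
    (hF0 : ∀ n x, 0 ≤ F n x) (hh0 : ∀ n x, 0 ≤ h n x) (hF : ∀ n, AEStronglyMeasurable (F n) μ)
    (hh : ∀ n, Integrable (h n) μ) (hD : Integrable D μ) (hle : ∀ n x, F n x ≤ c * h n x + D x)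
    (hlim : ∀ᵐ x ∂μ, Tendsto (F · x) atTop (𝓝 0)) (hM : ∀ n, ∫ x, h n x ∂μ ≤ M) :
    limsup (fun n => ∫ x, F n x ∂μ) atTop ≤ c * M := by
  have hW := (tendsto_integral_max_sub_mul_zero hc hh0 hF
    (fun n => (hh n).aestronglyMeasurable) hD hle hlim).add_const (c * M)
  have hsplit (n : ℕ) : ∫ x, F n x ∂μ ≤ (∫ x, max (F n x - c * h n x) 0 ∂μ) + c * M := by
    have hWint := integrable_max_sub_mul_zero (hF n) (hh n).aestronglyMeasurable hD (hle n)
    calc ∫ x, F n x ∂μ ≤ ∫ x, (max (F n x - c * h n x) 0 + c * h n x) ∂μ :=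
          integral_mono_of_nonneg (.of_forall (hF0 n)) (hWint.add ((hh n).const_mul c))
            (.of_forall fun x => by linarith [le_max_left (F n x - c * h n x) 0])
      _ = (∫ x, max (F n x - c * h n x) 0 ∂μ) + c * ∫ x, h n x ∂μ := by
          rw [integral_add hWint ((hh n).const_mul c), integral_const_mul]
      _ ≤ (∫ x, max (F n x - c * h n x) 0 ∂μ) + c * M := by gcongr; exact hM n
  calc limsup (fun n => ∫ x, F n x ∂μ) atTop
      ≤ limsup (fun n => (∫ x, max (F n x - c * h n x) 0 ∂μ) + c * M) atTop :=
        limsup_le_limsup (.of_forall hsplit)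
          (isCoboundedUnder_le_of_le atTop fun n => integral_nonneg (hF0 n))
          hW.isBoundedUnder_le
    _ = c * M := by rw [hW.limsup_eq, zero_add]

end Truncation

theorem brezis_lieb_limsup_estimate_general (N : ℕ) (Ω : Set (EuclideanSpace ℝ (Fin N)))
    (G g : ℝ → ℝ) (K p M : ℝ)
    (hcont : ContinuousOn G (Set.Ici 0))
    (hconv : ConvexOn ℝ (Set.Ici 0) G)
    (hmono : MonotoneOn G (Set.Ici 0))
    (hG0 : G 0 = 0)
    (hC1 : ∀ t : ℝ, 0 < t → HasDerivAt G (g t) t)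
    (hK : 2 < K)
    (hΔ2 : ∀ x : ℝ, 0 ≤ x → G (2 * x) ≤ K * G x)
    (hp : 1 < p)
    (hgrowth : ∀ a : ℝ, 0 < a → g a * a ≤ p * G a)
    (u : (EuclideanSpace ℝ (Fin N)) → ℝ) (un : ℕ → (EuclideanSpace ℝ (Fin N)) → ℝ)
    (hmeas : ∀ n, AEMeasurable (un n) (volume.restrict Ω))
    (humeas : AEMeasurable u (volume.restrict Ω))
    (hae : ∀ᵐ x ∂(volume.restrict Ω), Tendsto (fun n => un n x) atTop (nhds (u x)))
    (hMbd : ∀ n, (∫ x in Ω, G |un n x - u x|) ≤ M)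
    (hMint : ∀ n, IntegrableOn (fun x => G |un n x - u x|) Ω volume)
    (huint : ∀ ε : ℝ, ε ∈ Set.Ioo (0:ℝ) 1 →
      IntegrableOn (fun x => G (|u x| / ε)) Ω volume) :
    ∀ ε : ℝ, ε ∈ Set.Ioo (0:ℝ) 1 →
      Filter.limsup (fun n => ∫ x in Ω, abs (G (|un n x|) - G (|un n x - u x|) - G (|u x|))) atTop
        ≤ ε * (max (p - 1) 1 * K ^ 2 / 2) * M := by
  rintro ε ⟨hε0, hε1⟩
  have hGabs : Continuous fun r : ℝ => G |r| :=
    hcont.comp_continuous continuous_abs fun r => abs_nonneg r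
  refine limsup_integral_le_of_le_mul_add (by positivity) (fun n x => abs_nonneg _)
    (fun n x => hmono.nonneg_of_map_zero hG0 (abs_nonneg _)) (fun n => ?_) hMint
    ((huint ε ⟨hε0, hε1⟩).const_mul (max (p - 1) 1 * K ^ 2 + 1))
    (fun n x => hconv.abs_sub_sub_le_young hmono hG0 hC1 hK.le hΔ2 (by linarith) hgrowth hε0
      hε1.le (un n x) (u x)) ?_ hMbd
  · exact (((hGabs.measurable.comp_aemeasurable (hmeas n)).sub
      (hGabs.measurable.comp_aemeasurable ((hmeas n).sub humeas))).sub
      (hGabs.measurable.comp_aemeasurable humeas)).abs.aestronglyMeasurable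
  · filter_upwards [hae] with x hx
    simpa [hG0] using ((((hGabs.tendsto _).comp hx).sub
      ((hGabs.tendsto _).comp (hx.sub_const (u x)))).sub_const (G |u x|)).abs

theorem brezis_lieb_limsup_estimate (N : ℕ) (Ω : Set (EuclideanSpace ℝ (Fin N)))
    (hΩ : MeasurableSet Ω)
    (G g : ℝ → ℝ) (K p M : ℝ)
    (hcont : ContinuousOn G (Set.Ici 0))
    (hconv : ConvexOn ℝ (Set.Ici 0) G)
    (hmono : MonotoneOn G (Set.Ici 0))
    (hG0 : G 0 = 0)
    (hC1 : ∀ t : ℝ, 0 < t → HasDerivAt G (g t) t)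
    (hgcont : ContinuousOn g (Set.Ioi 0))
    (hK : 2 < K)
    (hΔ2 : ∀ x : ℝ, 0 ≤ x → G (2 * x) ≤ K * G x)
    (hp : 1 < p)
    (hgrowth : ∀ a : ℝ, 0 < a → g a * a ≤ p * G a)
    (u : (EuclideanSpace ℝ (Fin N)) → ℝ) (un : ℕ → (EuclideanSpace ℝ (Fin N)) → ℝ)
    (hmeas : ∀ n, AEMeasurable (un n) (volume.restrict Ω))
    (humeas : AEMeasurable u (volume.restrict Ω))
    (hae : ∀ᵐ x ∂(volume.restrict Ω), Tendsto (fun n => un n x) atTop (nhds (u x)))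
    (hMbd : ∀ n, (∫ x in Ω, G |un n x - u x|) ≤ M)
    (hMint : ∀ n, IntegrableOn (fun x => G |un n x - u x|) Ω volume)
    (huint : ∀ ε : ℝ, ε ∈ Set.Ioo (0:ℝ) 1 →
      IntegrableOn (fun x => G (|u x| / ε)) Ω volume) :
    ∀ ε : ℝ, ε ∈ Set.Ioo (0:ℝ) 1 →
      Filter.limsup (fun n => ∫ x in Ω, abs (G (|un n x|) - G (|un n x - u x|) - G (|u x|))) atTop
        ≤ ε * (max (p - 1) 1 * K ^ 2 / 2) * M :=
  brezis_lieb_limsup_estimate_general N Ω G g K p M hcont hconv hmono hG0 hC1 hK hΔ2 hp hgrowth u un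
    hmeas humeas hae hMbd hMint huint
end

section
/- Let Ω ⊆ ℝ^N be measurable and G a C¹ Orlicz function with Δ₂-constant K > 2 and derivative g satisfying g(a)·a ≤ p·G(a) for some p > 1. Suppose u_n → u a.e. on Ω, M := sup_n ∫_Ω G(|u_n − u|) dx < ∞, and ∫_Ω G(λ|u|) dx < ∞ for all λ > 0. Then ∫_Ω |G(|u_n|) − G(|u_n − u|) − G(|u|)| dx → 0 as n → ∞. -/
open MeasureTheory Filter

lemma aux_pow_bound (G g : ℝ → ℝ) (p : ℝ) (hp : 1 < p)
    (hC1 : ∀ t : ℝ, 0 < t → HasDerivAt G (g t) t)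
    (hgrowth : ∀ a : ℝ, 0 < a → g a * a ≤ p * G a)
    (hG0 : G 0 = 0) :
    ∀ a : ℝ, 0 ≤ a → ∀ t : ℝ, 1 ≤ t → G (t * a) ≤ t ^ p * G a := by
  intro a ha t ht
  rcases eq_or_lt_of_le ha with h0 | ha0
  · simp [← h0, hG0]
  have ht0 : (0:ℝ) < t := lt_of_lt_of_le one_pos ht
  set φ : ℝ → ℝ := fun s => G (s * a) * s ^ (-p) with hφdef
  have hφ' : ∀ s : ℝ, 0 < s →
      HasDerivAt φ (g (s*a) * a * s ^ (-p) + G (s*a) * (-p * s ^ (-p-1))) s := by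
    intro s hs0
    have hsa : 0 < s * a := mul_pos hs0 ha0
    have hG' : HasDerivAt (fun t => G (t * a)) (g (s*a) * a) s := by
      have := (hC1 (s*a) hsa).comp s ((hasDerivAt_id s).mul_const a)
      rw [one_mul] at this
      exact this
    have hr : HasDerivAt (fun t : ℝ => t ^ (-p)) (-p * s ^ (-p - 1)) s :=
      Real.hasDerivAt_rpow_const (Or.inl (ne_of_gt hs0))
    exact hG'.mul hr
  have hderiv_nonpos : ∀ s : ℝ, 1 ≤ s →
      g (s*a) * a * s ^ (-p) + G (s*a) * (-p * s ^ (-p-1)) ≤ 0 := by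
    intro s hs
    have hs0 : (0:ℝ) < s := lt_of_lt_of_le one_pos hs
    have hsa : 0 < s * a := mul_pos hs0 ha0
    have hsp : s ^ (-p) = s * s ^ (-p-1) := by
      have h := Real.rpow_add hs0 1 (-p-1)
      rw [Real.rpow_one] at h
      rw [show s * s ^ (-p-1) = s ^ (1 + (-p-1)) from h.symm]
      norm_num
    have hgle := hgrowth (s*a) hsa
    have hrpos : (0:ℝ) < s ^ (-p-1) := Real.rpow_pos_of_pos hs0 _
    rw [hsp]
    calc g (s*a) * a * (s * s ^ (-p-1)) + G (s*a) * (-p * s ^ (-p-1))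
        = (g (s*a) * (s*a) - p * G (s*a)) * s ^ (-p-1) := by ring
      _ ≤ 0 := mul_nonpos_of_nonpos_of_nonneg (by linarith) hrpos.le
  have hanti : AntitoneOn φ (Set.Ici 1) := by
    apply antitoneOn_of_deriv_nonpos (convex_Ici 1)
    · intro s hs
      have hs0 : (0:ℝ) < s := lt_of_lt_of_le one_pos hs
      exact (hφ' s hs0).continuousAt.continuousWithinAt
    · intro s hs
      rw [interior_Ici] at hs
      have hs0 : (0:ℝ) < s := lt_trans one_pos hs
      exact (hφ' s hs0).differentiableAt.differentiableWithinAt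
    · intro s hs
      rw [interior_Ici] at hs
      have hs0 : (0:ℝ) < s := lt_trans one_pos hs
      rw [(hφ' s hs0).deriv]
      exact hderiv_nonpos s hs.le
  have h1 : φ t ≤ φ 1 := hanti Set.self_mem_Ici (Set.mem_Ici.mpr ht) ht
  have hφ1 : φ 1 = G a := by simp [hφdef]
  have hφt : φ t = G (t * a) * t ^ (-p) := rfl
  rw [hφ1, hφt] at h1
  have htp : (0:ℝ) < t ^ p := Real.rpow_pos_of_pos ht0 p
  have h2 := mul_le_mul_of_nonneg_right h1 htp.le
  rw [mul_assoc, ← Real.rpow_add ht0] at h2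
  simp only [neg_add_cancel, Real.rpow_zero, mul_one] at h2
  linarith [h2]

lemma aux_eps (G : ℝ → ℝ) (p : ℝ) (hp : 1 < p) (hconv : ConvexOn ℝ (Set.Ici 0) G)
    (hpow : ∀ a : ℝ, 0 ≤ a → ∀ t : ℝ, 1 ≤ t → G (t * a) ≤ t ^ p * G a)
    (ε : ℝ) (hε : 0 < ε) :
    ∃ C : ℝ, 0 < C ∧ ∀ a b : ℝ, 0 ≤ a → 0 ≤ b →
      G (a + b) ≤ (1 + ε) * G a + C * G b := by
  have h1ε : (1:ℝ) < 1 + ε := by linarith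
  have hbase : (0:ℝ) < 1 + ε := by linarith
  set c : ℝ := (1 - p)⁻¹ with hc
  have hcneg : c < 0 := inv_lt_zero.mpr (by linarith)
  have hlt1 : (1 + ε) ^ c < 1 := Real.rpow_lt_one_of_one_lt_of_neg h1ε hcneg
  have hposc : 0 < (1 + ε) ^ c := Real.rpow_pos_of_pos hbase c
  set δ : ℝ := 1 - (1 + ε) ^ c with hδ
  have hδ0 : 0 < δ := by simp only [hδ]; linarith
  have hδ1 : δ < 1 := by simp only [hδ]; linarith
  have h1δ : (0:ℝ) < 1 - δ := by linarith
  refine ⟨δ * (δ⁻¹) ^ p, by positivity, ?_⟩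
  intro a b ha hb
  have hinv1 : (1:ℝ) ≤ (1 - δ)⁻¹ := (one_le_inv₀ h1δ).2 (by linarith)
  have hinv2 : (1:ℝ) ≤ δ⁻¹ := (one_le_inv₀ hδ0).2 hδ1.le
  -- convexity step
  have hmemx : (1 - δ)⁻¹ * a ∈ Set.Ici (0:ℝ) := by
    have : (0:ℝ) ≤ (1 - δ)⁻¹ * a := by positivity
    simpa using this
  have hmemy : δ⁻¹ * b ∈ Set.Ici (0:ℝ) := by
    have : (0:ℝ) ≤ δ⁻¹ * b := by positivity
    simpa using this
  have hcx := hconv.2 hmemx hmemy h1δ.le hδ0.le (by ring)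
  rw [smul_eq_mul, smul_eq_mul, smul_eq_mul, smul_eq_mul] at hcx
  have hsum : (1 - δ) * ((1 - δ)⁻¹ * a) + δ * (δ⁻¹ * b) = a + b := by
    field_simp
  rw [hsum] at hcx
  -- power bounds
  have hx := hpow a ha ((1 - δ)⁻¹) hinv1
  have hy := hpow b hb (δ⁻¹) hinv2
  have h1 : (1 - δ) * G ((1 - δ)⁻¹ * a) ≤ (1 - δ) * (((1 - δ)⁻¹) ^ p * G a) :=
    mul_le_mul_of_nonneg_left hx h1δ.le
  have h2 : δ * G (δ⁻¹ * b) ≤ δ * ((δ⁻¹) ^ p * G b) :=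
    mul_le_mul_of_nonneg_left hy hδ0.le
  -- the coefficient equals 1 + ε
  have hcoef : (1 - δ) * ((1 - δ)⁻¹) ^ p = 1 + ε := by
    have h1mδ : (1 - δ) = (1 + ε) ^ c := by simp [hδ]
    have hinv : (1 - δ)⁻¹ = (1 + ε) ^ (-c) := by
      rw [h1mδ, ← Real.rpow_neg hbase.le]
    have hpowp : ((1 + ε) ^ (-c)) ^ p = (1 + ε) ^ (-c * p) := by
      rw [← Real.rpow_mul hbase.le]
    have hcp : c + (-c * p) = 1 := by
      have hne : (1 - p) ≠ 0 := by linarith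
      have h' : c * (1 - p) = 1 := by rw [hc]; exact inv_mul_cancel₀ hne
      linarith
    rw [hinv, h1mδ, hpowp, ← Real.rpow_add hbase, hcp, Real.rpow_one]
  calc G (a + b) ≤ (1 - δ) * G ((1 - δ)⁻¹ * a) + δ * G (δ⁻¹ * b) := hcx
    _ ≤ (1 - δ) * (((1 - δ)⁻¹) ^ p * G a) + δ * ((δ⁻¹) ^ p * G b) := by linarith
    _ = ((1 - δ) * ((1 - δ)⁻¹) ^ p) * G a + (δ * (δ⁻¹) ^ p) * G b := by ring
    _ = (1 + ε) * G a + (δ * (δ⁻¹) ^ p) * G b := by rw [hcoef]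

theorem brezis_lieb_difference_tendsto_zero (N : ℕ) (Ω : Set (EuclideanSpace ℝ (Fin N)))
    (hΩ : MeasurableSet Ω)
    (G g : ℝ → ℝ) (K p M : ℝ)
    (hcont : ContinuousOn G (Set.Ici 0))
    (hconv : ConvexOn ℝ (Set.Ici 0) G)
    (hmono : MonotoneOn G (Set.Ici 0))
    (hG0 : G 0 = 0)
    (hC1 : ∀ t : ℝ, 0 < t → HasDerivAt G (g t) t)
    (hgcont : ContinuousOn g (Set.Ioi 0))
    (hK : 2 < K)
    (hΔ2 : ∀ x : ℝ, 0 ≤ x → G (2 * x) ≤ K * G x)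
    (hp : 1 < p)
    (hgrowth : ∀ a : ℝ, 0 < a → g a * a ≤ p * G a)
    (u : (EuclideanSpace ℝ (Fin N)) → ℝ) (un : ℕ → (EuclideanSpace ℝ (Fin N)) → ℝ)
    (hmeas : ∀ n, AEMeasurable (un n) (volume.restrict Ω))
    (humeas : AEMeasurable u (volume.restrict Ω))
    (hae : ∀ᵐ x ∂(volume.restrict Ω), Tendsto (fun n => un n x) atTop (nhds (u x)))
    (hMbd : ∀ n, (∫ x in Ω, G |un n x - u x|) ≤ M)
    (hMint : ∀ n, IntegrableOn (fun x => G |un n x - u x|) Ω volume)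
    (huint : ∀ lam : ℝ, 0 < lam → IntegrableOn (fun x => G (lam * |u x|)) Ω volume) :
    Tendsto (fun n => ∫ x in Ω, abs (G (|un n x|) - G (|un n x - u x|) - G (|u x|)))
      atTop (nhds 0) := by
  have hGnn : ∀ x : ℝ, 0 ≤ x → 0 ≤ G x := fun x hx => by
    have := hmono Set.self_mem_Ici (Set.mem_Ici.mpr hx) hx
    rwa [hG0] at this
  have hpow := aux_pow_bound G g p hp hC1 hgrowth hG0
  have hGA : Continuous fun t : ℝ => G |t| := by
    refine hcont.comp_continuous continuous_abs fun t => Set.mem_Ici.mpr (abs_nonneg t)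
  have hM0 : 0 ≤ M := by
    refine le_trans ?_ (hMbd 0)
    exact setIntegral_nonneg hΩ fun x _ => hGnn _ (abs_nonneg _)
  -- pointwise key inequality
  have hptwise : ∀ (ε C : ℝ), 0 ≤ ε →
      (∀ a b : ℝ, 0 ≤ a → 0 ≤ b → G (a + b) ≤ (1 + ε) * G a + C * G b) →
      ∀ s a b : ℝ, 0 ≤ s → 0 ≤ a → 0 ≤ b → |s - a| ≤ b →
      |G s - G a| ≤ ε * G a + C * G b := by
    intro ε C hε hkey s a b hs ha hb hsab
    have habs := abs_le.mp hsab
    rcases le_total a s with h | h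
    · have h1 : s ≤ a + b := by linarith
      have h2 : G s ≤ G (a + b) :=
        hmono (Set.mem_Ici.mpr hs) (Set.mem_Ici.mpr (by linarith)) h1
      have h3 : G a ≤ G s := hmono (Set.mem_Ici.mpr ha) (Set.mem_Ici.mpr hs) h
      have := hkey a b ha hb
      rw [abs_of_nonneg (by linarith)]
      linarith
    · have h1 : a ≤ s + b := by linarith
      have h2 : G a ≤ G (s + b) :=
        hmono (Set.mem_Ici.mpr ha) (Set.mem_Ici.mpr (by linarith)) h1
      have h3 : G s ≤ G a := hmono (Set.mem_Ici.mpr hs) (Set.mem_Ici.mpr ha) h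
      have := hkey s b hs hb
      have hεm : ε * G s ≤ ε * G a := mul_le_mul_of_nonneg_left h3 hε
      rw [abs_of_nonpos (by linarith)]
      linarith
  rw [NormedAddCommGroup.tendsto_nhds_zero]
  intro ε' hε'
  set ε : ℝ := ε' / (2 * (M + 1)) with hεdef
  have hεpos : 0 < ε := by positivity
  obtain ⟨C, hCpos, hkey⟩ := aux_eps G p hp hconv hpow ε hεpos
  set μ := volume.restrict Ω with hμ
  set f : ℕ → (EuclideanSpace ℝ (Fin N)) → ℝ :=
    fun n x => |G (|un n x|) - G (|un n x - u x|) - G (|u x|)| with hfdef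
  set h : ℕ → (EuclideanSpace ℝ (Fin N)) → ℝ :=
    fun n x => max (f n x - ε * G (|un n x - u x|)) 0 with hhdef
  -- pointwise bound on f
  have hfb : ∀ n x, f n x ≤ ε * G (|un n x - u x|) + (C + 1) * G (|u x|) := by
    intro n x
    have habs : abs (|un n x| - |un n x - u x|) ≤ |u x| := by
      have := abs_abs_sub_abs_le_abs_sub (un n x) (un n x - u x)
      simpa using this
    have h1 : |G (|un n x|) - G (|un n x - u x|)| ≤
        ε * G (|un n x - u x|) + C * G (|u x|) :=
      hptwise ε C hεpos.le hkey _ _ _ (abs_nonneg _) (abs_nonneg _) (abs_nonneg _) habs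
    have h2 : 0 ≤ G (|u x|) := hGnn _ (abs_nonneg _)
    have h3 : f n x ≤ |G (|un n x|) - G (|un n x - u x|)| + |G (|u x|)| := by
      simpa [hfdef, sub_eq_add_neg, add_assoc] using
        abs_add_le (G (|un n x|) - G (|un n x - u x|)) (-(G (|u x|)))
    rw [abs_of_nonneg h2] at h3
    linarith
  -- measurability
  have hGvm : ∀ n, AEMeasurable (fun x => G (|un n x - u x|)) μ := fun n =>
    hGA.measurable.comp_aemeasurable ((hmeas n).sub humeas)
  have hGum : AEMeasurable (fun x => G (|u x|)) μ :=
    hGA.measurable.comp_aemeasurable humeas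
  have hGunm : ∀ n, AEMeasurable (fun x => G (|un n x|)) μ := fun n =>
    hGA.measurable.comp_aemeasurable (hmeas n)
  have hfm : ∀ n, AEMeasurable (f n) μ := fun n =>
    (continuous_abs.measurable.comp_aemeasurable (((hGunm n).sub (hGvm n)).sub hGum))
  have hhm : ∀ n, AEStronglyMeasurable (h n) μ := fun n =>
    (((hfm n).sub (aemeasurable_const.mul (hGvm n))).max aemeasurable_const).aestronglyMeasurable
  -- dominating bound
  set bound : (EuclideanSpace ℝ (Fin N)) → ℝ := fun x => (C + 1) * G (|u x|) with hbdef
  have hbound_int : Integrable bound μ := by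
    have h1 : IntegrableOn (fun x => G (1 * |u x|)) Ω volume := huint 1 one_pos
    simp only [one_mul] at h1
    exact h1.const_mul (C + 1)
  have hh_nonneg : ∀ n x, 0 ≤ h n x := fun n x => le_max_right _ _
  have hh_le : ∀ n x, h n x ≤ bound x := by
    intro n x
    refine max_le ?_ ?_
    · have := hfb n x; simp only [hbdef]; linarith
    · simp only [hbdef]
      exact mul_nonneg (by linarith) (hGnn _ (abs_nonneg _))
  have h_bound : ∀ n, ∀ᵐ x ∂μ, ‖h n x‖ ≤ bound x := by
    intro n
    filter_upwards with x
    rw [Real.norm_of_nonneg (hh_nonneg n x)]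
    exact hh_le n x
  -- a.e. convergence of h to 0
  have h_lim : ∀ᵐ x ∂μ, Tendsto (fun n => h n x) atTop (nhds 0) := by
    filter_upwards [hae] with x hx
    have h2 : Tendsto (fun n => G (|un n x|)) atTop (nhds (G (|u x|))) :=
      (hGA.tendsto (u x)).comp hx
    have hx0 : Tendsto (fun n => un n x - u x) atTop (nhds 0) := by
      have := hx.sub (tendsto_const_nhds (x := u x))
      simpa using this
    have h3 : Tendsto (fun n => G (|un n x - u x|)) atTop (nhds (G (|(0:ℝ)|))) :=
      (hGA.tendsto 0).comp hx0
    rw [abs_zero, hG0] at h3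
    have hf0 : Tendsto (fun n => f n x) atTop (nhds 0) := by
      have := ((h2.sub h3).sub (tendsto_const_nhds (x := G (|u x|)))).abs
      simpa [hfdef] using this
    have := (hf0.sub (h3.const_mul ε)).max (tendsto_const_nhds (x := (0:ℝ)))
    simpa [hhdef] using this
  -- dominated convergence
  have hDCT : Tendsto (fun n => ∫ x, h n x ∂μ) atTop (nhds 0) := by
    have := tendsto_integral_of_dominated_convergence bound hhm hbound_int h_bound h_lim
    simpa using this
  -- integrability of h n and f n
  have hh_int : ∀ n, Integrable (h n) μ := fun n =>
    hbound_int.mono' (hhm n) (h_bound n)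
  have hfle : ∀ n x, f n x ≤ h n x + ε * G (|un n x - u x|) := by
    intro n x
    have : f n x - ε * G (|un n x - u x|) ≤ h n x := le_max_left _ _
    linarith
  have hGv_int : ∀ n, Integrable (fun x => G (|un n x - u x|)) μ := fun n => hMint n
  have hf_int : ∀ n, Integrable (f n) μ := by
    intro n
    refine ((hh_int n).add ((hGv_int n).const_mul ε)).mono' (hfm n).aestronglyMeasurable ?_
    filter_upwards with x
    rw [Real.norm_of_nonneg (abs_nonneg _)]
    exact hfle n x
  -- conclude
  have hεM : ε * (M + 1) = ε' / 2 := by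
    rw [hεdef]; field_simp
  have hDCT' := hDCT.eventually_lt_const (show (0:ℝ) < ε' / 2 by positivity)
  filter_upwards [hDCT'] with n hn
  have hint_le : (∫ x, f n x ∂μ) ≤ (∫ x, h n x ∂μ) + ε * (∫ x, G (|un n x - u x|) ∂μ) := by
    have h1 : (∫ x, f n x ∂μ) ≤ ∫ x, (h n x + ε * G (|un n x - u x|)) ∂μ := by
      refine integral_mono (hf_int n) ((hh_int n).add ((hGv_int n).const_mul ε)) ?_
      intro x; exact hfle n x
    rwa [integral_add (hh_int n) ((hGv_int n).const_mul ε), integral_const_mul] at h1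
  have hIv : (∫ x, G (|un n x - u x|) ∂μ) ≤ M := hMbd n
  have hεv : ε * (∫ x, G (|un n x - u x|) ∂μ) ≤ ε * M :=
    mul_le_mul_of_nonneg_left hIv hεpos.le
  have hL_nonneg : 0 ≤ ∫ x, f n x ∂μ :=
    integral_nonneg fun x => abs_nonneg _
  have : (∫ x, f n x ∂μ) < ε' := by
    have hεM' : ε * M < ε' / 2 := by nlinarith
    calc (∫ x, f n x ∂μ) ≤ (∫ x, h n x ∂μ) + ε * (∫ x, G (|un n x - u x|) ∂μ) := hint_le
      _ ≤ (∫ x, h n x ∂μ) + ε * M := by linarith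
      _ < ε' / 2 + ε' / 2 := by linarith
      _ = ε' := by ring
  rw [Real.norm_of_nonneg hL_nonneg]
  exact this
end
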